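/- arXiv:2006.13126 — 2 statements merged into one kernel-verified Lean document; each statement's English description precedes it below -/
import Mathlib

section
/- Let $Y$ be a Poisson random variable with rate $\lambda \geq 0$. Then $\mathbb{E}[\exp(Y/(4\lambda+1))] \leq e^{e/4} < 2$, and consequently the sub-exponential norm satisfies $\|Y\|_{\psi_1} \leq 4\lambda + 1$. -/
/-! `Y ~ Poisson(λ)` has moment generating function `E[exp(sY)] = exp(λ(eˢ - 1))`. At
`s = 1/(4λ+1)` the bound `1 - s ≤ e⁻ˢ` gives `λ(eˢ - 1) ≤ 1/4 ≤ e/4`, and `e/4 < log 2` since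
`e < 2.72` and `log 2 > 0.69`; so `t = 4λ+1` is admissible in the infimum defining `‖Y‖_{ψ₁}`. -/

open MeasureTheory ProbabilityTheory Real
open scoped NNReal Nat

/-- The sub-exponential norm `‖X‖_{ψ₁} = inf {t > 0 : E[exp(|X|/t)] ≤ 2}` of a random
variable `X` on a measure space `(Ω, μ)`. -/
noncomputable def subExpNorm {Ω : Type*} [MeasurableSpace Ω] (μ : Measure Ω) (X : Ω → ℝ) : ℝ :=
  sInf {t : ℝ | 0 < t ∧ ∫ ω, Real.exp (|X ω| / t) ∂μ ≤ 2}

theorem subExpNorm_le_of_integral_le {Ω : Type*} [MeasurableSpace Ω] {μ : Measure Ω}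
    {X : Ω → ℝ} {t : ℝ} (ht : 0 < t) (h : ∫ ω, exp (|X ω| / t) ∂μ ≤ 2) :
    subExpNorm μ X ≤ t :=
  csInf_le ⟨0, fun _ hs => hs.1.le⟩ ⟨ht, h⟩

theorem integral_exp_mul_poissonMeasure (r : ℝ≥0) (s : ℝ) :
    ∫ n, exp (s * n) ∂poissonMeasure r = exp (r * (exp s - 1)) := by
  rw [integral_poissonMeasure]
  calc ∑' n : ℕ, (exp (-r) * r ^ n / n !) • exp (s * n)
      = ∑' n : ℕ, exp (-r) * ((r * exp s) ^ n / n !) := by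
        congr with n
        rw [smul_eq_mul, mul_pow, ← exp_nat_mul]
        ring_nf
    _ = exp (-r) * exp (r * exp s) := by
        rw [tsum_mul_left, (NormedSpace.expSeries_div_hasSum_exp (r * exp s : ℝ)).tsum_eq,
          exp_eq_exp_ℝ]
    _ = exp (r * (exp s - 1)) := by
        rw [← exp_add]
        ring_nf

theorem mul_exp_inv_add_one_sub_one_le {x : ℝ} (hx : 0 ≤ x) :
    x * (exp (x + 1)⁻¹ - 1) ≤ 1 := by
  set y := (x + 1)⁻¹
  have hy : y * (x + 1) = 1 := inv_mul_cancel₀ (by positivity)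
  have hexp : exp y * (1 - y) ≤ 1 := by
    calc exp y * (1 - y) ≤ exp y * exp (-y) := by
          gcongr
          linarith [add_one_le_exp (-y)]
      _ = 1 := by rw [← exp_add, add_neg_cancel, exp_zero]
  nlinarith [exp_pos y]

theorem exp_exp_one_div_four_lt_two : exp (exp 1 / 4) < 2 := by
  have h : exp 1 / 4 < log 2 := by linarith [exp_one_lt_d9, log_two_gt_d9]
  simpa [exp_log two_pos] using exp_lt_exp.mpr h

/-- For a Poisson random variable `Y` with rate `λ ≥ 0`,
`E[exp(Y/(4λ+1))] ≤ e^{e/4} < 2`, and consequently `‖Y‖_{ψ₁} ≤ 4λ + 1`. -/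
theorem poisson_subExpNorm_le (lam : NNReal) :
    (∫ k : ℕ, Real.exp ((k : ℝ) / (4 * (lam : ℝ) + 1)) ∂(poissonMeasure lam)) ≤
        Real.exp (Real.exp 1 / 4) ∧
      Real.exp (Real.exp 1 / 4) < 2 ∧
      subExpNorm (poissonMeasure lam) (fun k : ℕ => (k : ℝ)) ≤ 4 * (lam : ℝ) + 1 := by
  have hmgf : ∫ k : ℕ, exp ((k : ℝ) / (4 * lam + 1)) ∂poissonMeasure lam ≤ exp (exp 1 / 4) := by
    simp_rw [div_eq_inv_mul, integral_exp_mul_poissonMeasure]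
    have hexponent := mul_exp_inv_add_one_sub_one_le (mul_nonneg zero_le_four lam.coe_nonneg)
    exact exp_le_exp.mpr (by linarith [one_le_exp zero_le_one])
  refine ⟨hmgf, exp_exp_one_div_four_lt_two, subExpNorm_le_of_integral_le (by positivity) ?_⟩
  simp_rw [Nat.abs_cast]
  exact hmgf.trans exp_exp_one_div_four_lt_two.le
end

section
/- Let $x, y, \hat{x}, \hat{y} \in [0,1]$ with $x + y > 0$, and suppose $|\hat{x} - x| \leq \delta$ and $|\hat{y} - y| \leq \delta$. Define $\hat{s} = \hat{x}/(\hat{x}+\hat{y})$ if $\hat{x}+\hat{y} > 0$ and $\hat{s} = 0$ otherwise. Then $|\hat{s} - x/(x+y)| \leq \min(\delta/(x+y),\ \delta/(\hat{x}+\hat{y}),\ 1)$, where $\delta/(\hat{x}+\hat{y})$ is interpreted as $+\infty$ when $\hat{x}+\hat{y}=0$. -/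
/-!
The difference of the two ratios has numerator `x̂ y - x ŷ = x̂ (y - ŷ) + ŷ (x̂ - x)`, of
absolute value at most `δ (x̂ + ŷ)`; dividing by `(x̂ + ŷ)(x + y)` gives the bound
`δ / (x + y)`, and exchanging the roles of `(x, y)` and `(x̂, ŷ)` gives `δ / (x̂ + ŷ)`.
Both ratios lie in `[0, 1]`, hence the bound `1`. When `x̂ + ŷ = 0` we have `x̂ = 0`,
so `x ≤ δ` and `x / (x + y) ≤ δ / (x + y)`.
-/

theorem div_add_sub_div_add {K : Type*} [Field K] {x y x' y' : K} (hxy : x + y ≠ 0)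
    (hxy' : x' + y' ≠ 0) :
    x' / (x' + y') - x / (x + y) = (x' * y - x * y') / ((x' + y') * (x + y)) := by
  rw [div_sub_div _ _ hxy' hxy]
  ring

section RatioPerturbation

variable {K : Type*} [Field K] [LinearOrder K] [IsStrictOrderedRing K] {x y x' y' δ : K}

theorem div_add_mem_Icc (hx : 0 ≤ x) (hy : 0 ≤ y) : x / (x + y) ∈ Set.Icc 0 1 :=
  ⟨div_nonneg hx (add_nonneg hx hy),
    div_le_one_of_le₀ (le_add_of_nonneg_right hy) (add_nonneg hx hy)⟩

theorem abs_mul_sub_mul_le (hx' : 0 ≤ x') (hy' : 0 ≤ y') (hdx : |x' - x| ≤ δ)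
    (hdy : |y' - y| ≤ δ) : |x' * y - x * y'| ≤ δ * (x' + y') :=
  calc |x' * y - x * y'| = |x' * (y - y') + y' * (x' - x)| := by ring_nf
    _ ≤ x' * |y' - y| + y' * |x' - x| := by
      grw [abs_add_le, abs_mul, abs_mul, abs_of_nonneg hx', abs_of_nonneg hy', abs_sub_comm y]
    _ ≤ x' * δ + y' * δ := by gcongr
    _ = δ * (x' + y') := by ring

theorem abs_div_add_sub_div_add_le (hx' : 0 ≤ x') (hy' : 0 ≤ y') (hxy : 0 < x + y)
    (hxy' : 0 < x' + y') (hdx : |x' - x| ≤ δ) (hdy : |y' - y| ≤ δ) :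
    |x' / (x' + y') - x / (x + y)| ≤ δ / (x + y) :=
  calc |x' / (x' + y') - x / (x + y)| = |x' * y - x * y'| / ((x' + y') * (x + y)) := by
        rw [div_add_sub_div_add hxy.ne' hxy'.ne', abs_div, abs_of_pos (mul_pos hxy' hxy)]
    _ ≤ δ * (x' + y') / ((x' + y') * (x + y)) := by
        gcongr
        exact abs_mul_sub_mul_le hx' hy' hdx hdy
    _ = δ / (x + y) := by rw [mul_comm (x' + y'), mul_div_mul_right _ _ hxy'.ne']

end RatioPerturbation

theorem ratio_perturbation_bound_general (x y xh yh δ : ℝ)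
    (hx : 0 ≤ x) (hy : 0 ≤ y)
    (hxh : 0 ≤ xh) (hyh : 0 ≤ yh)
    (hpos : 0 < x + y) (hdx : |xh - x| ≤ δ) (hdy : |yh - y| ≤ δ)
    (s : ℝ) (hs : s = if 0 < xh + yh then xh / (xh + yh) else 0) :
    |s - x / (x + y)| ≤ min (δ / (x + y)) 1 ∧
      (0 < xh + yh → |s - x / (x + y)| ≤ δ / (xh + yh)) := by
  obtain ⟨ht0, ht1⟩ := div_add_mem_Icc hx hy
  subst hs
  split_ifs with h
  · obtain ⟨hs0, hs1⟩ := div_add_mem_Icc hxh hyh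
    refine ⟨le_min (abs_div_add_sub_div_add_le hxh hyh hpos h hdx hdy)
      (abs_sub_le_of_nonneg_of_le hs0 hs1 ht0 ht1), fun _ => ?_⟩
    rw [abs_sub_comm] at hdx hdy ⊢
    exact abs_div_add_sub_div_add_le hx hy h hpos hdx hdy
  · obtain rfl : xh = 0 := by linarith [not_lt.1 h]
    have hxδ : x ≤ δ := by rwa [zero_sub, abs_neg, abs_of_nonneg hx] at hdx
    rw [zero_sub, abs_neg, abs_of_nonneg ht0]
    exact ⟨le_min (by gcongr) ht1, fun h' => absurd h' h⟩

/-- Perturbation bound for the ratio `x/(x+y)` under entrywise `δ`-perturbations: with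
`x, y, x̂, ŷ ∈ [0,1]`, `x + y > 0`, `|x̂ - x| ≤ δ`, `|ŷ - y| ≤ δ`, and
`ŝ = x̂/(x̂+ŷ)` if `x̂+ŷ > 0` (else `ŝ = 0`), we have
`|ŝ - x/(x+y)| ≤ min(δ/(x+y), δ/(x̂+ŷ), 1)`, where the second bound is only asserted
when `x̂ + ŷ > 0` (it is vacuous, i.e. `+∞`, when `x̂ + ŷ = 0`). -/
theorem ratio_perturbation_bound (x y xh yh δ : ℝ)
    (hx : 0 ≤ x) (hx1 : x ≤ 1) (hy : 0 ≤ y) (hy1 : y ≤ 1)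
    (hxh : 0 ≤ xh) (hxh1 : xh ≤ 1) (hyh : 0 ≤ yh) (hyh1 : yh ≤ 1)
    (hpos : 0 < x + y) (hdx : |xh - x| ≤ δ) (hdy : |yh - y| ≤ δ)
    (s : ℝ) (hs : s = if 0 < xh + yh then xh / (xh + yh) else 0) :
    |s - x / (x + y)| ≤ min (δ / (x + y)) 1 ∧
      (0 < xh + yh → |s - x / (x + y)| ≤ δ / (xh + yh)) :=
  ratio_perturbation_bound_general x y xh yh δ hx hy hxh hyh hpos hdx hdy s hs
end
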